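/- arXiv:1802.03550 — 8 statements merged into one kernel-verified Lean document; each statement's English description precedes it below -/
import Mathlib

section
/- Let (G,·) be a group and define the binary operation a ⊙ b = a²ba⁻¹ on G. Then (G,⊙) is a gyrogroup if and only if G is central by a 2-Engel group, i.e. if and only if ⁅⁅x,y⁆,y⁆ ∈ Z(G) for all x,y ∈ G. Here '(G,⊙) is a gyrogroup' means: there exists a family of maps gyr[a,b] : G → G (a,b ∈ G) such that (i) there is e ∈ G with e ⊙ a = a for all a; (ii) for every a ∈ G there is a' ∈ G with a' ⊙ a = e; (iii) each gyr[a,b] is a bijection of G satisfying gyr[a,b](x ⊙ y) = gyr[a,b](x) ⊙ gyr[a,b](y) for all x,y, and a ⊙ (b ⊙ c) = (a ⊙ b) ⊙ gyr[a,b](c) for all a,b,c; (iv) gyr[a ⊙ b, b] = gyr[a,b] for all a,b. -/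
/-!
Gyroassociativity determines the gyrations: since left translations `x ↦ a ⊙ x` are injective,
`a ⊙ (b ⊙ c) = (a ⊙ b) ⊙ gyr[a,b] c` forces `gyr[a,b]` to be conjugation by `⁅a, b⁻¹⁆`, and
conjugations are automorphisms of `⊙`. The loop property `gyr[a ⊙ b, b] = gyr[a,b]` then says
that `⁅a, b⁻¹⁆⁻¹ ⁅a ⊙ b, b⁻¹⁆` is central, and this element is a conjugate of `⁅⁅a, b⁆, b⁆⁻¹`.
-/

open scoped commutatorElement

/-- The gyrogroup operation `a ⊙ b = a² b a⁻¹` associated to a group. -/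
def gyroOp {G : Type*} [Group G] (a b : G) : G := a ^ 2 * b * a⁻¹

section GyroOp

variable {G : Type*} [Group G]

@[simp]
lemma one_gyroOp (a : G) : gyroOp 1 a = a := by
  simp [gyroOp]

lemma inv_gyroOp_self (a : G) : gyroOp a⁻¹ a = 1 := by
  simp only [gyroOp]
  group

lemma gyroOp_right_injective (a : G) : Function.Injective (gyroOp a) := fun x y h => by
  simpa [gyroOp] using h

lemma map_gyroOp {F H : Type*} [Group H] [FunLike F G H] [MonoidHomClass F G H] (f : F)
    (a b : G) : f (gyroOp a b) = gyroOp (f a) (f b) := by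
  simp [gyroOp]

lemma gyroOp_gyroOp (a b c : G) :
    gyroOp a (gyroOp b c) = gyroOp (gyroOp a b) (MulAut.conj ⁅a, b⁻¹⁆ c) := by
  simp only [gyroOp, MulAut.conj_apply, commutatorElement_def, pow_two]
  group

lemma commutator_inv_mul_commutator_gyroOp (a b : G) :
    ⁅a, b⁻¹⁆⁻¹ * ⁅gyroOp a b, b⁻¹⁆ = (b⁻¹ * a) * ⁅⁅a, b⁆, b⁆⁻¹ * (b⁻¹ * a)⁻¹ := by
  simp only [gyroOp, commutatorElement_def, pow_two]
  group

end GyroOp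

lemma MulAut.conj_eq_conj_iff {G : Type*} [Group G] {g h : G} :
    MulAut.conj g = MulAut.conj h ↔ g⁻¹ * h ∈ Subgroup.center G := by
  rw [Subgroup.mem_center_iff, ← inv_mul_eq_one, ← map_inv, ← map_mul, MulEquiv.ext_iff]
  refine forall_congr' fun z => ?_
  rw [MulAut.conj_apply, MulAut.one_apply, mul_inv_eq_iff_eq_mul, eq_comm]

lemma gyroOp_conj_commutator_eq_iff {G : Type*} [Group G] (a b : G) :
    MulAut.conj ⁅gyroOp a b, b⁻¹⁆ = MulAut.conj ⁅a, b⁻¹⁆ ↔ ⁅⁅a, b⁆, b⁆ ∈ Subgroup.center G := by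
  rw [eq_comm, MulAut.conj_eq_conj_iff, commutator_inv_mul_commutator_gyroOp]
  constructor
  · intro h
    simpa [mul_assoc] using inv_mem (Subgroup.instNormalCenter.conj_mem _ h (b⁻¹ * a)⁻¹)
  · intro h
    exact Subgroup.instNormalCenter.conj_mem _ (inv_mem h) _

/-- `(G, ⊙)` with `a ⊙ b = a² b a⁻¹` is a gyrogroup if and only if
`G` is central by a 2-Engel group, i.e. `⁅⁅x,y⁆,y⁆ ∈ Z(G)` for all `x, y`. -/
theorem gyroOp_gyrogroup_iff_central_by_two_engel (G : Type*) [Group G] :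
    (∃ e : G, ∃ gyr : G → G → G → G,
      (∀ a : G, gyroOp e a = a) ∧
      (∀ a : G, ∃ a' : G, gyroOp a' a = e) ∧
      (∀ a b : G, Function.Bijective (gyr a b)) ∧
      (∀ a b x y : G, gyr a b (gyroOp x y) = gyroOp (gyr a b x) (gyr a b y)) ∧
      (∀ a b c : G, gyroOp a (gyroOp b c) = gyroOp (gyroOp a b) (gyr a b c)) ∧
      (∀ a b : G, gyr (gyroOp a b) b = gyr a b)) ↔
    (∀ x y : G, ⁅⁅x, y⁆, y⁆ ∈ Subgroup.center G) := by
  constructor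
  · rintro ⟨-, gyr, -, -, -, -, gyroassoc, loop⟩ a b
    have gyr_eq : ∀ a b, gyr a b = MulAut.conj ⁅a, b⁻¹⁆ := fun a b => funext fun c =>
      gyroOp_right_injective _ (by rw [← gyroassoc, gyroOp_gyroOp])
    rw [← gyroOp_conj_commutator_eq_iff, ← DFunLike.coe_fn_eq, ← gyr_eq, ← gyr_eq, loop]
  · intro engel
    refine ⟨1, fun a b => MulAut.conj ⁅a, b⁻¹⁆, one_gyroOp, fun a => ⟨a⁻¹, inv_gyroOp_self a⟩,
      fun a b => (MulAut.conj _).bijective, fun a b => map_gyroOp _, gyroOp_gyroOp,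
      fun a b => ?_⟩
    exact congrArg DFunLike.coe ((gyroOp_conj_commutator_eq_iff a b).mpr (engel a b))
end

section
/- Let G be any group and define a ⊙ b = a²ba⁻¹. Then the left gyroassociative law holds with gyr[a,b] equal to conjugation by ⁅a,b⁻¹⁆: for all a,b,c ∈ G, a ⊙ (b ⊙ c) = (a ⊙ b) ⊙ (⁅a,b⁻¹⁆ · c · ⁅a,b⁻¹⁆⁻¹); explicitly, a²·(b²cb⁻¹)·a⁻¹ = (a²ba⁻¹)² · (⁅a,b⁻¹⁆ c ⁅a,b⁻¹⁆⁻¹) · (a²ba⁻¹)⁻¹. -/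
open scoped commutatorElement

/-! The gyration is forced by the identity `(a ⊙ b)² ⁅a, b⁻¹⁆ = a² b²`: regrouping the right-hand
side as `((a ⊙ b)² ⁅a, b⁻¹⁆) c ((a ⊙ b)² ⁅a, b⁻¹⁆)⁻¹ (a ⊙ b)` turns it into `a² b² c b⁻¹ a⁻¹`,
which is the left-hand side. -/

theorem sq_conj_mul_commutatorElement_inv {G : Type*} [Group G] (a b : G) :
    (a ^ 2 * b * a⁻¹) ^ 2 * ⁅a, b⁻¹⁆ = a ^ 2 * b ^ 2 := by
  simp only [commutatorElement_def, pow_two]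
  group

/-- In any group, with `a ⊙ b = a² b a⁻¹`, the left gyroassociative law holds with
`gyr[a,b]` equal to conjugation by `⁅a, b⁻¹⁆`. -/
theorem left_gyroassociative_law (G : Type*) [Group G] (a b c : G) :
    a ^ 2 * (b ^ 2 * c * b⁻¹) * a⁻¹ =
      (a ^ 2 * b * a⁻¹) ^ 2 * (⁅a, b⁻¹⁆ * c * ⁅a, b⁻¹⁆⁻¹) * (a ^ 2 * b * a⁻¹)⁻¹ := by
  set x := a ^ 2 * b * a⁻¹ with hx
  have regroup : x ^ 2 * (⁅a, b⁻¹⁆ * c * ⁅a, b⁻¹⁆⁻¹) * x⁻¹ =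
      (x ^ 2 * ⁅a, b⁻¹⁆) * c * (x ^ 2 * ⁅a, b⁻¹⁆)⁻¹ * x := by
    group
  rw [regroup, sq_conj_mul_commutatorElement_inv, hx]
  group
end

section
/- Let G be a group that is central by a 2-Engel group, i.e. ⁅⁅x,y⁆,y⁆ ∈ Z(G) for all x,y ∈ G, and define a ⊙ b = a²ba⁻¹. Then the left loop property holds for the gyrations gyr[a,b] = conjugation by ⁅a,b⁻¹⁆: for all a,b,c ∈ G, ⁅a ⊙ b, b⁻¹⁆ · c · ⁅a ⊙ b, b⁻¹⁆⁻¹ = ⁅a,b⁻¹⁆ · c · ⁅a,b⁻¹⁆⁻¹, where a ⊙ b = a²ba⁻¹. -/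
open scoped commutatorElement

/-!
Write `y = b⁻¹`. A direct expansion shows that `⁅a ⊙ b, y⁆` is `⁅a, y⁆` multiplied on the
left by a conjugate of `⁅⁅a, y⁆, y⁆⁻¹`. Under the central-by-2-Engel hypothesis that factor is
central, so the two gyrators differ by a central element and induce the same conjugation.
-/

section

variable {G : Type*} [Group G]

theorem commutatorElement_sq_mul_mul_inv_inv (a b : G) :
    ⁅a ^ 2 * b * a⁻¹, b⁻¹⁆ =
      (a ^ 2 * b * a⁻¹) * ⁅⁅a, b⁻¹⁆, b⁻¹⁆⁻¹ * (a ^ 2 * b * a⁻¹)⁻¹ * ⁅a, b⁻¹⁆ := by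
  group

theorem commutatorElement_sq_mul_mul_inv_inv_of_mem_center (a b : G)
    (h : ⁅⁅a, b⁻¹⁆, b⁻¹⁆ ∈ Subgroup.center G) :
    ⁅a ^ 2 * b * a⁻¹, b⁻¹⁆ = ⁅⁅a, b⁻¹⁆, b⁻¹⁆⁻¹ * ⁅a, b⁻¹⁆ := by
  have hinv := Subgroup.mem_center_iff.mp ((Subgroup.center G).inv_mem h)
  rw [commutatorElement_sq_mul_mul_inv_inv, hinv, mul_inv_cancel_right]

theorem mul_conj_eq_conj_of_mem_center {z : G} (hz : z ∈ Subgroup.center G) (p q : G) :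
    z * p * q * (z * p)⁻¹ = p * q * p⁻¹ := by
  calc z * p * q * (z * p)⁻¹ = z * (p * q * p⁻¹) * z⁻¹ := by group
    _ = p * q * p⁻¹ := by
      rw [← Subgroup.mem_center_iff.mp hz (p * q * p⁻¹), mul_inv_cancel_right]

end

/-- If `G` is central by a 2-Engel group, then the left loop property holds for the
gyrations `gyr[a,b] = conjugation by ⁅a, b⁻¹⁆`, where `a ⊙ b = a² b a⁻¹`. -/
theorem left_loop_property (G : Type*) [Group G]
    (h : ∀ x y : G, ⁅⁅x, y⁆, y⁆ ∈ Subgroup.center G) (a b c : G) :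
    ⁅a ^ 2 * b * a⁻¹, b⁻¹⁆ * c * ⁅a ^ 2 * b * a⁻¹, b⁻¹⁆⁻¹ =
      ⁅a, b⁻¹⁆ * c * ⁅a, b⁻¹⁆⁻¹ := by
  rw [commutatorElement_sq_mul_mul_inv_inv_of_mem_center a b (h a b⁻¹)]
  exact mul_conj_eq_conj_of_mem_center ((Subgroup.center G).inv_mem (h a b⁻¹)) _ _
end

section
/- Let G₁ be a finite group whose order is not divisible by 3, let G₂ be a group, and let f : G₁ → G₂ be a map satisfying f(a²ba⁻¹) = f(a)²·f(b)·f(a)⁻¹ for all a,b ∈ G₁. Then f is a group homomorphism: f(xy) = f(x)·f(y) for all x,y ∈ G₁. -/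
/-!
Write `a ⊙ b = a² b a⁻¹`. Preserving `⊙` forces `f 1 = 1` and `f x⁻¹ = (f x)⁻¹`, and then,
since `g³ w g⁻³ = g ⊙ (g w g⁻²)` with `g w g⁻² = (g ⊙ w⁻¹)⁻¹`, `f` commutes with conjugation
by every cube. When `3 ∤ |G₁|` every element is a cube, so `f` preserves all conjugations, and
`x y = x ⊙ (x⁻¹ y x)` then gives `f (x y) = f x * f y`.
-/

def PreservesGyroMul {G H : Type*} [Group G] [Group H] (f : G → H) : Prop :=
  ∀ a b : G, f (a ^ 2 * b * a⁻¹) = f a ^ 2 * f b * (f a)⁻¹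

namespace PreservesGyroMul

variable {G H : Type*} [Group G] [Group H] {f : G → H}

theorem map_one (hf : PreservesGyroMul f) : f 1 = 1 := by
  have h := hf 1 1
  simp only [one_pow, mul_one, inv_one] at h
  rw [pow_two, mul_inv_cancel_right] at h
  exact left_eq_mul.mp h

theorem map_inv (hf : PreservesGyroMul f) (x : G) : f x⁻¹ = (f x)⁻¹ := by
  have h := hf x x⁻¹
  rw [show x ^ 2 * x⁻¹ * x⁻¹ = 1 by group, hf.map_one] at h
  calc f x⁻¹ = (f x ^ 2)⁻¹ * (f x ^ 2 * f x⁻¹ * (f x)⁻¹) * f x := by group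
    _ = (f x)⁻¹ := by rw [← h]; group

theorem map_sq (hf : PreservesGyroMul f) (g : G) : f (g ^ 2) = f g ^ 2 := by
  have h := hf g g
  rw [mul_inv_cancel_right, mul_inv_cancel_right] at h
  exact h

theorem map_pow_three (hf : PreservesGyroMul f) (g : G) : f (g ^ 3) = f g ^ 3 := by
  have h := hf g (g ^ 2)
  rw [show g ^ 2 * g ^ 2 * g⁻¹ = g ^ 3 by group, hf.map_sq] at h
  rw [h]; group

theorem map_mul_mul_inv_sq (hf : PreservesGyroMul f) (g w : G) :
    f (g * w * (g ^ 2)⁻¹) = f g * f w * (f g ^ 2)⁻¹ := by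
  calc f (g * w * (g ^ 2)⁻¹) = (f (g ^ 2 * w⁻¹ * g⁻¹))⁻¹ := by
        rw [← hf.map_inv]; congr 1; group
    _ = f g * f w * (f g ^ 2)⁻¹ := by rw [hf, hf.map_inv]; group

theorem map_conj_pow_three (hf : PreservesGyroMul f) (g w : G) :
    f (g ^ 3 * w * (g ^ 3)⁻¹) = f (g ^ 3) * f w * (f (g ^ 3))⁻¹ := by
  calc f (g ^ 3 * w * (g ^ 3)⁻¹) = f (g ^ 2 * (g * w * (g ^ 2)⁻¹) * g⁻¹) := by congr 1; group
    _ = f (g ^ 3) * f w * (f (g ^ 3))⁻¹ := by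
        rw [hf, hf.map_mul_mul_inv_sq, hf.map_pow_three]; group

theorem map_mul_of_map_conj (hf : PreservesGyroMul f)
    (hconj : ∀ u w : G, f (u * w * u⁻¹) = f u * f w * (f u)⁻¹) (x y : G) :
    f (x * y) = f x * f y := by
  calc f (x * y) = f (x ^ 2 * (x⁻¹ * y * x⁻¹⁻¹) * x⁻¹) := by congr 1; group
    _ = f x * f y := by rw [hf, hconj, hf.map_inv]; group

end PreservesGyroMul

theorem gyro_hom_is_group_hom_general (G₁ G₂ : Type*) [Group G₁] [Group G₂]
    (h₃ : ¬ (3 ∣ Nat.card G₁)) (f : G₁ → G₂)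
    (hf : ∀ a b : G₁, f (a ^ 2 * b * a⁻¹) = (f a) ^ 2 * f b * (f a)⁻¹) :
    ∀ x y : G₁, f (x * y) = f x * f y := by
  have hf : PreservesGyroMul f := hf
  have hcop : (Nat.card G₁).Coprime 3 := (Nat.prime_three.coprime_iff_not_dvd.mpr h₃).symm
  refine hf.map_mul_of_map_conj fun u w => ?_
  obtain ⟨g, rfl⟩ : ∃ g, g ^ 3 = u :=
    ⟨(powCoprime hcop).symm u, (powCoprime hcop).apply_symm_apply u⟩
  exact hf.map_conj_pow_three g w

/-- If `G₁` is a finite group with `3 ∤ |G₁|` and `f : G₁ → G₂` preserves the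
gyrogroup operation `a ⊙ b = a² b a⁻¹`, then `f` is a group homomorphism. -/
theorem gyro_hom_is_group_hom (G₁ G₂ : Type*) [Group G₁] [Group G₂] [Finite G₁]
    (h₃ : ¬ (3 ∣ Nat.card G₁)) (f : G₁ → G₂)
    (hf : ∀ a b : G₁, f (a ^ 2 * b * a⁻¹) = (f a) ^ 2 * f b * (f a)⁻¹) :
    ∀ x y : G₁, f (x * y) = f x * f y :=
  gyro_hom_is_group_hom_general G₁ G₂ h₃ f hf
end

section
/- Let G₁ and G₂ be groups and let f : G₁ → G₂ be a map satisfying f(a²ba⁻¹) = f(a)²·f(b)·f(a)⁻¹ for all a,b ∈ G₁. Then f(a⁻¹) = f(a)⁻¹ for all a ∈ G₁. -/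
theorem sq_mul_mul_inv_eq_one_iff {G : Type*} [Group G] (x y : G) :
    x ^ 2 * y * x⁻¹ = 1 ↔ y = x⁻¹ := by
  rw [mul_inv_eq_one, sq, mul_assoc, mul_eq_left, mul_eq_one_iff_inv_eq, eq_comm]

section GyroHom

variable {G₁ G₂ : Type*} [Group G₁] [Group G₂] {f : G₁ → G₂}

theorem map_one_of_map_gyro (hf : ∀ a b : G₁, f (a ^ 2 * b * a⁻¹) = (f a) ^ 2 * f b * (f a)⁻¹) :
    f 1 = 1 := by
  have h := hf 1 1
  rw [mul_inv_cancel_right, mul_inv_cancel_right, one_pow, sq, left_eq_mul] at h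
  exact h

theorem map_inv_of_map_gyro (hf : ∀ a b : G₁, f (a ^ 2 * b * a⁻¹) = (f a) ^ 2 * f b * (f a)⁻¹)
    (a : G₁) : f a⁻¹ = (f a)⁻¹ := by
  have h := hf a a⁻¹
  rw [(sq_mul_mul_inv_eq_one_iff a a⁻¹).mpr rfl, map_one_of_map_gyro hf, eq_comm,
    sq_mul_mul_inv_eq_one_iff] at h
  exact h

end GyroHom

/-- A map preserving the gyrogroup operation `a ⊙ b = a² b a⁻¹` satisfies
`f (a⁻¹) = (f a)⁻¹`. -/
theorem gyro_hom_map_inv (G₁ G₂ : Type*) [Group G₁] [Group G₂] (f : G₁ → G₂)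
    (hf : ∀ a b : G₁, f (a ^ 2 * b * a⁻¹) = (f a) ^ 2 * f b * (f a)⁻¹) :
    ∀ a : G₁, f a⁻¹ = (f a)⁻¹ :=
  map_inv_of_map_gyro hf
end

section
/- Let G₁ and G₂ be groups and let f : G₁ → G₂ be a map satisfying f(a²ba⁻¹) = f(a)²·f(b)·f(a)⁻¹ for all a,b ∈ G₁. Then f(ab) = f(a)·f(ba⁻¹)·f(a) for all a,b ∈ G₁. -/
/-!
Writing `a ⊙ b = a² b a⁻¹`, one has `a ⊙ a = a²` and `a ⊙ a⁻¹ = 1`, so `f` preserves squares,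
the identity and inverses. The key identity `a u a = u⁻¹ ⊙ (u ⊙ a)²` holds in every group,
so `f (a u a) = f a · f u · f a`; the theorem is the case `u = b a⁻¹`.
-/

section GyroHom

variable {G H : Type*} [Group G] [Group H] {f : G → H}

theorem mul_mul_self_eq_gyro (a u : G) :
    a * u * a = u⁻¹ ^ 2 * (u ^ 2 * a * u⁻¹) ^ 2 * u⁻¹⁻¹ := by
  simp only [sq]
  group

variable (hf : ∀ a b : G, f (a ^ 2 * b * a⁻¹) = f a ^ 2 * f b * (f a)⁻¹)
include hf

theorem map_sq_of_gyro (a : G) : f (a ^ 2) = f a ^ 2 := by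
  simpa using hf a a

theorem map_one_of_gyro : f 1 = 1 := by
  have h : f 1 * f 1 = f 1 := by simpa [sq] using (map_sq_of_gyro hf 1).symm
  exact mul_eq_left.mp h

theorem map_inv_of_gyro (u : G) : f u⁻¹ = (f u)⁻¹ := by
  have h := hf u u⁻¹
  rw [show u ^ 2 * u⁻¹ * u⁻¹ = 1 by group, map_one_of_gyro hf] at h
  rw [← mul_right_inj (f u ^ 2), ← mul_left_inj (f u)⁻¹, ← h]
  group

theorem map_mul_mul_self_of_gyro (a u : G) : f (a * u * a) = f a * f u * f a := by
  rw [mul_mul_self_eq_gyro, hf, map_inv_of_gyro hf, map_sq_of_gyro hf, hf,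
    ← mul_mul_self_eq_gyro]

end GyroHom

/-- A map preserving the gyrogroup operation `a ⊙ b = a² b a⁻¹` satisfies
`f (ab) = f a · f (b a⁻¹) · f a`. -/
theorem gyro_hom_eq_4 (G₁ G₂ : Type*) [Group G₁] [Group G₂] (f : G₁ → G₂)
    (hf : ∀ a b : G₁, f (a ^ 2 * b * a⁻¹) = (f a) ^ 2 * f b * (f a)⁻¹) :
    ∀ a b : G₁, f (a * b) = f a * f (b * a⁻¹) * f a := by
  intro a b
  rw [← map_mul_mul_self_of_gyro hf]
  group
end

section
/- Let G₁ and G₂ be groups and let f : G₁ → G₂ be a map satisfying f(a²ba⁻¹) = f(a)²·f(b)·f(a)⁻¹ for all a,b ∈ G₁. Then f(a³b) = f(a)³·f(b) for all a,b ∈ G₁. -/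
/-!
Write `a ⊙ b = a² b a⁻¹`. Taking `b = a` shows that `f` preserves squares. Since
`(g² c g⁻¹)² = g² (c g c) g⁻¹ = g ⊙ (c g c)`, comparing `f` of both sides and cancelling the
outer factors shows that `f` preserves the "sandwich" `c g c`. Finally `a³ b = a ⊙ (a b a)`.
-/

def PreservesGyroOp {G₁ G₂ : Type*} [Group G₁] [Group G₂] (f : G₁ → G₂) : Prop :=
  ∀ a b : G₁, f (a ^ 2 * b * a⁻¹) = f a ^ 2 * f b * (f a)⁻¹

namespace PreservesGyroOp

variable {G₁ G₂ : Type*} [Group G₁] [Group G₂] {f : G₁ → G₂}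

theorem map_sq (hf : PreservesGyroOp f) (a : G₁) : f (a ^ 2) = f a ^ 2 := by
  have h := hf a a
  rw [mul_inv_cancel_right] at h
  rw [h, mul_inv_cancel_right]

theorem map_mul_mul_self (hf : PreservesGyroOp f) (c g : G₁) :
    f (c * g * c) = f c * f g * f c := by
  have key : f g ^ 2 * f (c * g * c) * (f g)⁻¹ = f g ^ 2 * (f c * f g * f c) * (f g)⁻¹ :=
    calc f g ^ 2 * f (c * g * c) * (f g)⁻¹
        = f ((g ^ 2 * c * g⁻¹) ^ 2) := by rw [← hf]; congr 1; simp only [sq]; group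
      _ = (f g ^ 2 * f c * (f g)⁻¹) ^ 2 := by rw [hf.map_sq, hf]
      _ = f g ^ 2 * (f c * f g * f c) * (f g)⁻¹ := by simp only [sq]; group
  simpa using key

theorem map_pow_three_mul (hf : PreservesGyroOp f) (a b : G₁) :
    f (a ^ 3 * b) = f a ^ 3 * f b := by
  calc f (a ^ 3 * b) = f (a ^ 2 * (a * b * a) * a⁻¹) := by congr 1; group
    _ = f a ^ 3 * f b := by rw [hf, hf.map_mul_mul_self]; group

end PreservesGyroOp

/-- A map preserving the gyrogroup operation `a ⊙ b = a² b a⁻¹` satisfies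
`f (a³ b) = (f a)³ · f b`. -/
theorem gyro_hom_eq_6 (G₁ G₂ : Type*) [Group G₁] [Group G₂] (f : G₁ → G₂)
    (hf : ∀ a b : G₁, f (a ^ 2 * b * a⁻¹) = (f a) ^ 2 * f b * (f a)⁻¹) :
    ∀ a b : G₁, f (a ^ 3 * b) = (f a) ^ 3 * f b :=
  PreservesGyroOp.map_pow_three_mul hf
end

section
/- Let G₁ and G₂ be groups and let f : G₁ → G₂ be a map satisfying f(a²ba⁻¹) = f(a)²·f(b)·f(a)⁻¹ for all a,b ∈ G₁. Then f(a³) = f(a)³ for all a ∈ G₁. -/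
section GyroHom

variable {G₁ G₂ : Type*} [Group G₁] [Group G₂] {f : G₁ → G₂}

theorem map_sq_of_map_gyro (hf : ∀ a b : G₁, f (a ^ 2 * b * a⁻¹) = f a ^ 2 * f b * (f a)⁻¹)
    (a : G₁) : f (a ^ 2) = f a ^ 2 := by
  simpa only [mul_inv_cancel_right] using hf a a

end GyroHom

/-- A map preserving the gyrogroup operation `a ⊙ b = a² b a⁻¹` satisfies
`f (a³) = (f a)³`. -/
theorem gyro_hom_map_cube (G₁ G₂ : Type*) [Group G₁] [Group G₂] (f : G₁ → G₂)
    (hf : ∀ a b : G₁, f (a ^ 2 * b * a⁻¹) = (f a) ^ 2 * f b * (f a)⁻¹) :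
    ∀ a : G₁, f (a ^ 3) = (f a) ^ 3 := by
  intro a
  calc f (a ^ 3) = f (a ^ 2 * a ^ 2 * a⁻¹) := by group
    _ = f a ^ 2 * f (a ^ 2) * (f a)⁻¹ := hf a (a ^ 2)
    _ = f a ^ 2 * f a ^ 2 * (f a)⁻¹ := by rw [map_sq_of_map_gyro hf]
    _ = f a ^ 3 := by group
end
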